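/- For every integer k ≥ 1, the simple symmetric fractional hedonic game induced by the complete graph on n = k(k+1)/2 agents (v_i(j) = 1 for all i ≠ j) admits a sequence of IS deviations starting from the singleton partition of length at least (k−1)k(k+1)/6; hence the dynamics of IS deviations in simple symmetric FHGs starting from the singleton partition may take Ω(n√n) steps. -/

import Mathlib

/-- A partition of the agent set `A`, encoded by the map sending each agent to
the coalition containing it. -/
def IsPartition {A : Type*} [DecidableEq A] (π : A → Finset A) : Prop :=
  (∀ i, i ∈ π i) ∧ ∀ i j, i ∈ π j → π i = π j

/-- Strict part of a weak preference relation `r`. -/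
def StrictPref {α : Type*} (r : α → α → Prop) (x y : α) : Prop :=
  r x y ∧ ¬ r y x

/-- `π'` is obtained from `π` by an IS deviation of agent `i`, where
`wp j C D` means that agent `j` weakly prefers coalition `C` to coalition `D`. -/
def IsISDeviation {A : Type*} [DecidableEq A]
    (wp : A → Finset A → Finset A → Prop) (π π' : A → Finset A) (i : A) : Prop :=
  π' i ≠ π i ∧
  (∀ j, j ≠ i → (π' j).erase i = (π j).erase i) ∧
  StrictPref (wp i) (π' i) (π i) ∧
  ∀ j ∈ (π' i).erase i, wp j (π' j) (π j)

/-- One step of the dynamics of IS deviations between partitions. -/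
def ISStep {A : Type*} [DecidableEq A]
    (wp : A → Finset A → Finset A → Prop) (π π' : A → Finset A) : Prop :=
  IsPartition π ∧ IsPartition π' ∧ ∃ i, IsISDeviation wp π π' i

/-- A partition is individually stable if no IS deviation from it is possible. -/
def IndividuallyStable {A : Type*} [DecidableEq A]
    (wp : A → Finset A → Finset A → Prop) (π : A → Finset A) : Prop :=
  IsPartition π ∧ ∀ π' : A → Finset A, ¬ ISStep wp π π'

/-- `r` is a weak order (total preorder) on the set `S`. -/
def WeakOrderOn {α : Type*} (r : α → α → Prop) (S : Set α) : Prop :=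
  (∀ x ∈ S, ∀ y ∈ S, r x y ∨ r y x) ∧
  ∀ x ∈ S, ∀ y ∈ S, ∀ z ∈ S, r x y → r y z → r x z

/-- `r` is antisymmetric on `S`, i.e. the preferences are strict. -/
def StrictPrefsOn {α : Type*} (r : α → α → Prop) (S : Set α) : Prop :=
  ∀ x ∈ S, ∀ y ∈ S, r x y → r y x → x = y

/-- `r` is (naturally) single-peaked on `S` with respect to the natural linear
order of `α`: whenever `y` lies strictly between `x` and `z`, `x ≻ y` implies `y ≿ z`. -/
def SinglePeakedOn {α : Type*} [LinearOrder α] (r : α → α → Prop) (S : Set α) : Prop :=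
  ∀ x ∈ S, ∀ y ∈ S, ∀ z ∈ S,
    ((x < y ∧ y < z) ∨ (z < y ∧ y < x)) → StrictPref r x y → r y z

/-- The utility of agent `i` for the coalition `C` in a fractional hedonic game
with utility functions `v`: the average value of the members of `C`. -/
def fhgUtil {A : Type*} [DecidableEq A] (v : A → A → ℚ) (i : A) (C : Finset A) : ℚ :=
  (∑ j ∈ C, v i j) / (C.card : ℚ)

/-- Coalition preferences of a fractional hedonic game. -/
def fhgPref {A : Type*} [DecidableEq A] (v : A → A → ℚ) :
    A → Finset A → Finset A → Prop :=
  fun i C D => fhgUtil v i D ≤ fhgUtil v i C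

/-! In the complete FHG an agent's utility for a coalition of size `c` is `1 - 1/c`, so an agent
may always move into another coalition that is at least as large as the one it leaves. Keep the
agents used so far in "stations" of sizes `1, 2, …, j`, and bring in `j + 1` fresh agents: the
first walks from its singleton through stations `1, 2, …, j`, the second through `1, …, j - 1`,
and so on, while the last one stays alone as the new station of size `1`. The stations then have
sizes `1, 2, …, j + 1`, after `j + (j - 1) + ⋯ + 1 = C(j + 1, 2)` moves, so building the
staircase on all `C(k + 1, 2)` agents takes `C(k + 1, 3) = (k - 1) k (k + 1) / 6` moves. -/

open Finset Function

section RelPath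

variable {α : Type*}

def RelPath (r : α → α → Prop) (m : ℕ) (a b : α) : Prop :=
  ∃ f : ℕ → α, f 0 = a ∧ f m = b ∧ ∀ l < m, r (f l) (f (l + 1))

variable {r : α → α → Prop}

theorem RelPath.refl (a : α) : RelPath r 0 a a :=
  ⟨fun _ => a, rfl, rfl, by simp⟩

theorem RelPath.trans {m m' : ℕ} {a b c : α} (h : RelPath r m a b) (h' : RelPath r m' b c) :
    RelPath r (m + m') a c := by
  obtain ⟨f, rfl, rfl, hf⟩ := h
  obtain ⟨g, hg0, rfl, hg⟩ := h'
  set fg : ℕ → α := fun l => if l ≤ m then f l else g (l - m)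
  have hfg : ∀ l, m ≤ l → fg l = g (l - m) := fun l hl => by
    by_cases hlm : l = m
    · simp [fg, hlm, hg0]
    · simp [fg, show ¬ l ≤ m by omega]
  refine ⟨fg, by simp [fg], by simpa using hfg (m + m') (by omega), fun l hl => ?_⟩
  by_cases hlm : l < m
  · simpa [fg, hlm.le, Nat.succ_le_of_lt hlm] using hf l hlm
  · rw [hfg l (by omega), hfg (l + 1) (by omega), show l + 1 - m = l - m + 1 by omega]
    exact hg _ (by omega)

end RelPath

section CompleteGame

variable {A : Type*} [DecidableEq A]

def completeFHG (A : Type*) [DecidableEq A] : A → A → ℚ := fun i j => if i = j then 0 else 1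

theorem fhgUtil_completeFHG {i : A} {C : Finset A} (hi : i ∈ C) :
    fhgUtil (completeFHG A) i C = 1 - 1 / #C := by
  have hC : (#C : ℚ) ≠ 0 := by exact_mod_cast (card_pos.mpr ⟨i, hi⟩).ne'
  have hsum : ∑ j ∈ C, completeFHG A i j = #C - 1 := by
    simp only [completeFHG, ← sum_erase_add _ _ hi]
    rw [sum_congr rfl fun j hj => if_neg (ne_of_mem_erase hj).symm]
    simp [card_erase_of_mem hi, Nat.cast_sub (card_pos.mpr ⟨i, hi⟩)]
  rw [fhgUtil, hsum]
  field_simp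

theorem fhgPref_completeFHG_iff {i : A} {C D : Finset A} (hC : i ∈ C) (hD : i ∈ D) :
    fhgPref (completeFHG A) i C D ↔ #D ≤ #C := by
  have hC0 : (0 : ℚ) < #C := by exact_mod_cast card_pos.mpr ⟨i, hC⟩
  have hD0 : (0 : ℚ) < #D := by exact_mod_cast card_pos.mpr ⟨i, hD⟩
  rw [fhgPref, fhgUtil_completeFHG hC, fhgUtil_completeFHG hD, sub_le_sub_iff_left,
    one_div_le_one_div hC0 hD0, Nat.cast_le]

end CompleteGame

section Labelling

variable {A β : Type*} [Fintype A] [DecidableEq β]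

def labelClass (lab : A → β) (c : β) : Finset A := univ.filter (lab · = c)

def partitionOf (lab : A → β) : A → Finset A := fun a => labelClass lab (lab a)

@[simp]
theorem mem_labelClass {lab : A → β} {c : β} {a : A} : a ∈ labelClass lab c ↔ lab a = c := by
  simp [labelClass]

theorem partitionOf_of_injective {lab : A → β} (h : Injective lab) :
    partitionOf lab = fun a => {a} := by
  ext a b
  simp [partitionOf, h.eq_iff]

variable [DecidableEq A]

theorem isPartition_partitionOf (lab : A → β) : IsPartition (partitionOf lab) := by
  refine ⟨fun i => by simp [partitionOf], fun i j h => ?_⟩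
  simp only [partitionOf, mem_labelClass] at h ⊢
  rw [h]

theorem labelClass_update_erase (lab : A → β) (x : A) (c d : β) :
    (labelClass (update lab x d) c).erase x = (labelClass lab c).erase x := by
  ext b
  by_cases hb : b = x <;> simp [hb]

theorem labelClass_update_of_ne (lab : A → β) {x : A} {c d : β} (hcd : c ≠ d)
    (hx : x ∉ labelClass lab c) : labelClass (update lab x d) c = labelClass lab c := by
  rw [← erase_eq_of_notMem hx, ← labelClass_update_erase lab x c d,
    erase_eq_of_notMem (by simp [hcd.symm])]

theorem labelClass_update_self (lab : A → β) (x : A) (c : β) :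
    labelClass (update lab x c) c = insert x (labelClass lab c) := by
  ext b
  by_cases hb : b = x <;> simp [hb]

theorem isISStep_partitionOf_update (lab : A → β) (x : A) (c : β)
    (h : #((labelClass lab (lab x)).erase x) < #((labelClass lab c).erase x)) :
    ISStep (fhgPref (completeFHG A)) (partitionOf lab) (partitionOf (update lab x c)) := by
  have hc : c ≠ lab x := by rintro rfl; exact lt_irrefl _ h
  have hx_old : x ∈ labelClass lab (lab x) := by simp
  have hx_new : x ∈ labelClass (update lab x c) c := by simp
  have hcard : #(labelClass lab (lab x)) < #(labelClass (update lab x c) c) := by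
    rw [← card_erase_add_one hx_old, ← card_erase_add_one hx_new, labelClass_update_erase]
    omega
  refine ⟨isPartition_partitionOf lab, isPartition_partitionOf _, x, ?_, fun j hj => ?_, ?_,
    fun j hj => ?_⟩
  · intro heq
    simp only [partitionOf, update_self] at heq
    exact hcard.ne' (congrArg card heq)
  · simp only [partitionOf, update_of_ne hj, labelClass_update_erase]
  · simp only [StrictPref, partitionOf, update_self]
    rw [fhgPref_completeFHG_iff hx_new hx_old, fhgPref_completeFHG_iff hx_old hx_new]
    exact ⟨hcard.le, not_le.mpr hcard⟩
  · obtain ⟨hjx, hj⟩ := mem_erase.mp hj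
    simp only [partitionOf, update_self, mem_labelClass, update_of_ne hjx] at hj ⊢
    rw [hj, fhgPref_completeFHG_iff (by simp [hjx, hj]) (by simp [hj])]
    exact card_le_card fun b hb => by
      have hbx : b ≠ x := by rintro rfl; exact hc (mem_labelClass.mp hb).symm
      simpa [hbx] using hb

theorem relPath_partitionOf_walk (lab : A → β) (x : A) (c : ℕ → β) (r : ℕ) (hc0 : c 0 = lab x)
    (hc : ∀ i < r, #((labelClass lab (c i)).erase x) < #((labelClass lab (c (i + 1))).erase x)) :
    RelPath (ISStep (fhgPref (completeFHG A))) r (partitionOf lab)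
      (partitionOf (update lab x (c r))) := by
  refine ⟨fun i => partitionOf (update lab x (c i)), by simp [hc0], rfl, fun i hi => ?_⟩
  have := isISStep_partitionOf_update (update lab x (c i)) x (c (i + 1))
    (by simpa only [update_self, labelClass_update_erase] using hc i hi)
  rwa [update_idem] at this

end Labelling

section Stations

variable {A β : Type*} [Fintype A] [DecidableEq β]

structure StationConfig (lab : A → β) (U : Finset A) (s : ℕ → β) (σ : ℕ → ℕ) (r : ℕ) :
    Prop where
  eq_of_notMem : ∀ a ∉ U, ∀ b, lab b = lab a → b = a
  injOn : Set.InjOn s (Set.Icc 1 r)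
  labelClass_subset : ∀ i ∈ Set.Icc 1 r, labelClass lab (s i) ⊆ U
  card_labelClass : ∀ i ∈ Set.Icc 1 r, #(labelClass lab (s i)) = σ i

namespace StationConfig

variable {lab : A → β} {U : Finset A} {s : ℕ → β} {σ : ℕ → ℕ} {r : ℕ}

theorem congr_sizes {σ' : ℕ → ℕ} (h : StationConfig lab U s σ r)
    (hσ : ∀ i ∈ Set.Icc 1 r, σ i = σ' i) : StationConfig lab U s σ' r :=
  ⟨h.eq_of_notMem, h.injOn, h.labelClass_subset,
    fun i hi => (h.card_labelClass i hi).trans (hσ i hi)⟩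

theorem labelClass_eq_singleton (h : StationConfig lab U s σ r) {a : A} (ha : a ∉ U) :
    labelClass lab (lab a) = {a} := by
  ext b
  simpa using ⟨h.eq_of_notMem a ha b, fun hb => hb ▸ rfl⟩

theorem notMem_labelClass (h : StationConfig lab U s σ r) {x : A} (hx : x ∉ U) {i : ℕ}
    (hi : i ∈ Set.Icc 1 r) : x ∉ labelClass lab (s i) :=
  fun hx' => hx (h.labelClass_subset i hi hx')

variable [DecidableEq A]

theorem join (h : StationConfig lab U s σ r) {x : A} (hx : x ∉ U) {t : ℕ}
    (ht : t ∈ Set.Icc 1 r) :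
    StationConfig (update lab x (s t)) (insert x U) s (update σ t (σ t + 1)) r := by
  refine ⟨fun a ha b hb => ?_, h.injOn, fun i hi => ?_, fun i hi => ?_⟩
  · obtain ⟨hax, haU⟩ := not_or.mp (mem_insert.not.mp ha)
    rw [update_of_ne hax] at hb
    by_cases hbx : b = x
    · subst hbx
      exact absurd (h.labelClass_subset t ht (by simp [← hb])) haU
    · exact h.eq_of_notMem a haU b (by rwa [update_of_ne hbx] at hb)
  · by_cases hit : i = t
    · subst hit
      rw [labelClass_update_self]
      exact insert_subset_insert x (h.labelClass_subset i hi)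
    · rw [labelClass_update_of_ne lab (h.injOn.ne hi ht hit) (h.notMem_labelClass hx hi)]
      exact (h.labelClass_subset i hi).trans (subset_insert x U)
  · by_cases hit : i = t
    · subst hit
      rw [labelClass_update_self, card_insert_of_notMem (h.notMem_labelClass hx hi),
        h.card_labelClass i hi, update_self]
    · rw [labelClass_update_of_ne lab (h.injOn.ne hi ht hit) (h.notMem_labelClass hx hi),
        h.card_labelClass i hi, update_of_ne hit]

theorem relPath_walk (h : StationConfig lab U s σ r) {x : A} (hx : x ∉ U) {t : ℕ}
    (ht : t ∈ Set.Icc 1 r) (hσ₁ : 0 < σ 1) (hσ : ∀ i, 1 ≤ i → i < t → σ i < σ (i + 1)) :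
    RelPath (ISStep (fhgPref (completeFHG A))) t (partitionOf lab)
      (partitionOf (update lab x (s t))) := by
  have hsize : ∀ i ∈ Set.Icc 1 r, #((labelClass lab (s i)).erase x) = σ i := fun i hi => by
    rw [erase_eq_of_notMem (h.notMem_labelClass hx hi), h.card_labelClass i hi]
  -- the walk starts at the walker's own label and then visits the stations `1, …, t`
  have hwalk := relPath_partitionOf_walk lab x (update s 0 (lab x)) t (update_self ..)
    fun i hi => ?_
  · rwa [update_of_ne (by grind)] at hwalk
  obtain ⟨ht1, htr⟩ := ht
  rw [update_of_ne (Nat.succ_ne_zero i), hsize (i + 1) ⟨by omega, by omega⟩]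
  rcases Nat.eq_zero_or_pos i with rfl | hi0
  · simpa [h.labelClass_eq_singleton hx] using hσ₁
  · rw [update_of_ne hi0.ne', hsize i ⟨hi0, by omega⟩]
    exact hσ i hi0 hi

theorem exists_relPath_walkers {t : ℕ} (htr : t ≤ r)
    (h : StationConfig lab U s (fun i => if i ≤ t then i else i + 1) r)
    (hU : #U + t ≤ Fintype.card A) :
    ∃ lab' U', RelPath (ISStep (fhgPref (completeFHG A))) ((t + 1).choose 2) (partitionOf lab)
      (partitionOf lab') ∧ StationConfig lab' U' s (· + 1) r ∧ #U' = #U + t := by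
  induction t generalizing lab U with
  | zero =>
    refine ⟨lab, U, RelPath.refl _, h.congr_sizes fun i hi => ?_, rfl⟩
    simp [show ¬ i ≤ 0 by grind]
  | succ t ih =>
    obtain ⟨x, -, hx⟩ := exists_mem_notMem_of_card_lt_card (s := U) (t := univ)
      (by rw [card_univ]; omega)
    have ht : t + 1 ∈ Set.Icc 1 r := ⟨by omega, htr⟩
    have hwalk := h.relPath_walk hx ht (by simp) fun i _ hit => by grind
    obtain ⟨lab', U', hpath, hconf, hcard⟩ := ih (by omega)
      ((h.join hx ht).congr_sizes fun i hi => by grind [update_apply])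
      (by rw [card_insert_of_notMem hx]; omega)
    refine ⟨lab', U', ?_, hconf, by rw [hcard, card_insert_of_notMem hx]; omega⟩
    rw [Nat.choose_succ_succ', Nat.choose_one_right]
    exact hwalk.trans hpath

theorem cons_singleton (h : StationConfig lab U s (· + 1) r) {y : A} (hy : y ∉ U) :
    StationConfig lab (insert y U) (fun i => if i = 1 then lab y else s (i - 1)) id (r + 1) := by
  have hstation : ∀ i ∈ Set.Icc 1 (r + 1), i ≠ 1 → i - 1 ∈ Set.Icc 1 r := fun i hi hi1 => by
    grind
  have hy_new : ∀ i ∈ Set.Icc 1 (r + 1), i ≠ 1 → lab y ≠ s (i - 1) := fun i hi hi1 hyi =>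
    h.notMem_labelClass hy (hstation i hi hi1) (mem_labelClass.mpr hyi)
  refine ⟨fun a ha => h.eq_of_notMem a fun haU => ha (mem_insert_of_mem haU),
    fun i hi i' hi' heq => ?_, fun i hi => ?_, fun i hi => ?_⟩
  · by_cases hi1 : i = 1 <;> by_cases hi'1 : i' = 1 <;> simp only [hi1, hi'1, if_true,
      if_false] at heq
    · rw [hi1, hi'1]
    · exact absurd heq (hy_new i' hi' hi'1)
    · exact absurd heq.symm (hy_new i hi hi1)
    · have := h.injOn (hstation i hi hi1) (hstation i' hi' hi'1) heq
      grind
  · by_cases hi1 : i = 1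
    · simp [hi1, h.labelClass_eq_singleton hy]
    · simp only [if_neg hi1]
      exact (h.labelClass_subset _ (hstation i hi hi1)).trans (subset_insert y U)
  · by_cases hi1 : i = 1
    · simp [hi1, h.labelClass_eq_singleton hy]
    · simp only [if_neg hi1, h.card_labelClass _ (hstation i hi hi1), id]
      grind

theorem exists_relPath_succ {j : ℕ} (h : StationConfig lab U s id j)
    (hU : #U + (j + 1) ≤ Fintype.card A) :
    ∃ (lab' : A → β) (U' : Finset A) (s' : ℕ → β),
      RelPath (ISStep (fhgPref (completeFHG A))) ((j + 1).choose 2) (partitionOf lab)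
        (partitionOf lab') ∧ StationConfig lab' U' s' id (j + 1) ∧ #U' = #U + (j + 1) := by
  obtain ⟨lab', U', hpath, hconf, hcard⟩ :=
    (h.congr_sizes (σ' := fun i => if i ≤ j then i else i + 1) fun i hi => by
      simp [hi.2]).exists_relPath_walkers le_rfl (by omega)
  obtain ⟨y, -, hy⟩ := exists_mem_notMem_of_card_lt_card (s := U') (t := univ)
    (by rw [card_univ]; omega)
  refine ⟨lab', insert y U', _, hpath, hconf.cons_singleton hy, ?_⟩
  rw [card_insert_of_notMem hy, hcard]
  omega

end StationConfig

end Stations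

theorem exists_relPath_staircase {A β : Type*} [Fintype A] [DecidableEq A] [DecidableEq β]
    [Nonempty β] {lab₀ : A → β} (h₀ : Injective lab₀) (j : ℕ)
    (hj : (j + 1).choose 2 ≤ Fintype.card A) :
    ∃ (lab : A → β) (U : Finset A) (s : ℕ → β),
      RelPath (ISStep (fhgPref (completeFHG A))) ((j + 1).choose 3) (partitionOf lab₀)
        (partitionOf lab) ∧ StationConfig lab U s id j ∧ #U = (j + 1).choose 2 := by
  induction j with
  | zero =>
    refine ⟨lab₀, ∅, fun _ => Classical.arbitrary β, RelPath.refl _,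
      ⟨fun a _ b hb => h₀ hb, ?_, ?_, ?_⟩, rfl⟩ <;> simp
  | succ j ih =>
    have hagents : (j + 1 + 1).choose 2 = (j + 1).choose 2 + (j + 1) := by
      rw [Nat.choose_succ_succ', Nat.choose_one_right, add_comm]
    obtain ⟨lab, U, s, hpath, hconf, hU⟩ := ih (by omega)
    obtain ⟨lab', U', s', hpath', hconf', hU'⟩ := hconf.exists_relPath_succ (by omega)
    refine ⟨lab', U', s', ?_, hconf', by omega⟩
    rw [Nat.choose_succ_succ' (j + 1) 2, add_comm]
    exact hpath.trans hpath'

theorem complete_fhg_long_IS_sequence_general (k : ℕ) :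
    ∃ (m : ℕ) (seq : ℕ → Fin (k * (k + 1) / 2) → Finset (Fin (k * (k + 1) / 2))),
      (k - 1) * k * (k + 1) / 6 ≤ m ∧
      seq 0 = (fun a => {a}) ∧
      ∀ l < m,
        ISStep (fhgPref fun i j : Fin (k * (k + 1) / 2) => if i = j then (0 : ℚ) else 1)
          (seq l) (seq (l + 1)) := by
  have hagents : (k + 1).choose 2 = k * (k + 1) / 2 := by
    rw [Nat.choose_two_right, Nat.add_sub_cancel, mul_comm]
  have hlength : (k - 1) * k * (k + 1) = 6 * (k + 1).choose 3 := by
    simpa [Nat.descFactorial_succ, Nat.factorial, mul_assoc] using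
      Nat.descFactorial_eq_factorial_mul_choose (k + 1) 3
  obtain ⟨-, -, -, ⟨seq, hseq₀, -, hseq⟩, -, -⟩ :=
    exists_relPath_staircase (A := Fin (k * (k + 1) / 2)) Fin.val_injective k (by simp [hagents])
  refine ⟨(k + 1).choose 3, seq, by omega, ?_, hseq⟩
  rw [hseq₀, partitionOf_of_injective Fin.val_injective]

/-- For every `k ≥ 1`, the simple symmetric fractional hedonic game induced by
the complete graph on `n = k * (k + 1) / 2` agents admits a sequence of IS
deviations starting from the singleton partition of length at least
`(k - 1) * k * (k + 1) / 6`. -/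
theorem complete_fhg_long_IS_sequence (k : ℕ) (hk : 1 ≤ k) :
    ∃ (m : ℕ) (seq : ℕ → Fin (k * (k + 1) / 2) → Finset (Fin (k * (k + 1) / 2))),
      (k - 1) * k * (k + 1) / 6 ≤ m ∧
      seq 0 = (fun a => {a}) ∧
      ∀ l < m,
        ISStep (fhgPref fun i j : Fin (k * (k + 1) / 2) => if i = j then (0 : ℚ) else 1)
          (seq l) (seq (l + 1)) :=
  complete_fhg_long_IS_sequence_general k
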